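/- Let γ(t) = (t, t², t³) and let S = { γ(t) + v γ'(t) : t ∈ ℝ, v ≠ 0 } ⊆ ℝ³ be the tangent surface generated by γ, where γ'(t) = (1, 2t, 3t²). Then dim_F(S) ≤ 1; equivalently, if μ is a nonzero finite Borel measure supported on S and β > 0 satisfies sup_{ξ∈ℝ³} |ξ|^{β/2}|μ̂(ξ)| < ∞, then β ≤ 1. -/

import Mathlib

open MeasureTheory Real Set

/-- The Fourier transform of a measure on `ℝ^n`:  `μ̂(ξ) = ∫ e^{−2πi x·ξ} dμ(x)`. -/
noncomputable def mft {n : ℕ} (μ : Measure (EuclideanSpace ℝ (Fin n)))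
    (ξ : EuclideanSpace ℝ (Fin n)) : ℂ :=
  ∫ x, Complex.exp (((-2 * Real.pi * inner ℝ x ξ : ℝ) : ℂ) * Complex.I) ∂μ

/-- The Fourier dimension of a set `A ⊆ ℝ^n`. -/
noncomputable def fourierDim {n : ℕ} (A : Set (EuclideanSpace ℝ (Fin n))) : ℝ :=
  sSup {s : ℝ | 0 ≤ s ∧ s ≤ (n : ℝ) ∧
    ∃ μ : Measure (EuclideanSpace ℝ (Fin n)), IsFiniteMeasure μ ∧ μ ≠ 0 ∧ μ Aᶜ = 0 ∧
      ∃ C : ℝ, ∀ ξ : EuclideanSpace ℝ (Fin n), ‖ξ‖ ^ (s / 2) * ‖mft μ ξ‖ ≤ C}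

/-- A point of `ℝ³` from three coordinates. -/
noncomputable def pt3 (x y z : ℝ) : EuclideanSpace ℝ (Fin 3) :=
  (EuclideanSpace.equiv (Fin 3) ℝ).symm ![x, y, z]

/-!
Let `n(t) = (3t², -3t, 1)`, so that `{x | ⟪x, n(t)⟫ = t³}` is the osculating plane of
`γ(t) = (t, t², t³)` at `γ(t)`. The tangent surface touches this plane along the whole tangent
line at `γ(t₀)`: for `p = γ(t₀) + v γ'(t₀)` one has `t³ - ⟪p, n(t)⟫ = (t - t₀)² (t - t₀ - 3v)`,
a double zero at `t = t₀`. Hence for a measure `μ` on the surface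
`D(Λ) = ∫∫ exp(-π t²) exp(-π Λ² (t³ - ⟪p, n(t)⟫)²) dt dμ(p) ≳ Λ^(-1/2)`.
Writing `exp(-π a²) = ∫ exp(2π i a σ) exp(-π σ²) dσ` turns the `p`-integral into an average of
`μ̂(Λ σ n(t))` over `σ`, and since `‖n(t)‖ ≥ 1` the decay `|μ̂(ξ)| ≲ ‖ξ‖^(-β/2)` gives
`D(Λ) ≲ Λ^(-β/2)`. Letting `Λ → ∞` forces `β ≤ 1`.
-/

open Filter Topology

theorem mul_measureReal_le_integral {X : Type*} [MeasurableSpace X] {μ : Measure X}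
    {f : X → ℝ} {s : Set X} {c : ℝ} (hf : Integrable f μ) (hf0 : 0 ≤ᵐ[μ] f)
    (hs : MeasurableSet s) (hμs : μ s ≠ ⊤) (hc : ∀ x ∈ s, c ≤ f x) :
    c * μ.real s ≤ ∫ x, f x ∂μ :=
  (setIntegral_ge_of_const_le_real hs hμs hc hf.integrableOn).trans
    (setIntegral_le_integral hf hf0)

theorem le_of_forall_mul_rpow_le {a b c K : ℝ} (hc : 0 < c)
    (h : ∀ Λ ≥ (1 : ℝ), c * Λ ^ (-a) ≤ K * Λ ^ (-b)) : b ≤ a := by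
  by_contra! hab
  have hlim : Tendsto (fun Λ : ℝ => K * Λ ^ (-(b - a))) atTop (𝓝 0) := by
    simpa using (tendsto_rpow_neg_atTop (sub_pos.mpr hab)).const_mul K
  obtain ⟨Λ, hΛ1, hΛ⟩ := ((eventually_ge_atTop 1).and (hlim.eventually (gt_mem_nhds hc))).exists
  have hΛ0 : 0 < Λ := one_pos.trans_le hΛ1
  have hcK : c * Λ ^ (-a) ≤ K * Λ ^ (-(b - a)) * Λ ^ (-a) := by
    rw [mul_assoc, ← rpow_add hΛ0]
    convert h Λ hΛ1 using 3
    ring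
  exact (le_of_mul_le_mul_right hcK (rpow_pos_of_pos hΛ0 _)).not_gt hΛ

open Complex in
theorem integral_cexp_mul_gaussian (a : ℝ) :
    ∫ σ : ℝ, cexp (↑(2 * π * a * σ) * I) * ↑(rexp (-π * σ ^ 2)) = ↑(rexp (-π * a ^ 2)) := by
  have hπ : (π : ℂ) ≠ 0 := ofReal_ne_zero.mpr pi_ne_zero
  have h := fourierIntegral_gaussian (b := π) (by simpa using pi_pos) (2 * π * a)
  rw [div_self hπ, one_cpow, one_mul] at h
  push_cast
  convert h using 2
  · ext σ
    ring_nf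
  · rw [eq_div_iff (mul_ne_zero (by norm_num) hπ)]
    ring

theorem integrable_abs_rpow_mul_exp_neg_mul_sq {b s : ℝ} (hb : 0 < b) (hs : -1 < s) :
    Integrable fun x : ℝ => |x| ^ s * rexp (-b * x ^ 2) := by
  have hpos : IntegrableOn (fun x : ℝ => |x| ^ s * rexp (-b * x ^ 2)) (Ioi 0) :=
    (integrableOn_rpow_mul_exp_neg_mul_sq hb hs).congr_fun
      (fun x hx => by rw [abs_of_pos (mem_Ioi.mp hx)]) measurableSet_Ioi
  rw [← integrableOn_univ, ← Iio_union_Ici (a := (0 : ℝ)), integrableOn_union,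
    integrableOn_Ici_iff_integrableOn_Ioi]
  refine ⟨?_, hpos⟩
  rw [← (Measure.measurePreserving_neg (volume : Measure ℝ)).integrableOn_comp_preimage
      (Homeomorph.neg ℝ).measurableEmbedding]
  simpa only [Function.comp_def, neg_sq, neg_preimage, neg_Iio, neg_zero, abs_neg] using hpos

section MeasureFourier

variable {n : ℕ} (μ : Measure (EuclideanSpace ℝ (Fin n)))

theorem norm_mft_le_measureReal_univ (ξ : EuclideanSpace ℝ (Fin n)) :
    ‖mft μ ξ‖ ≤ μ.real univ := by
  refine (norm_integral_le_integral_norm _).trans_eq ?_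
  simp only [Complex.norm_exp_ofReal_mul_I, integral_const, smul_eq_mul, mul_one]

theorem exists_norm_mft_le_rpow_of_bounded {s β C : ℝ} (hβ : 0 ≤ β) (hβs : β ≤ s)
    (hC : ∀ ξ, ‖ξ‖ ^ (s / 2) * ‖mft μ ξ‖ ≤ C) :
    ∃ C', ∀ ξ ≠ 0, ‖mft μ ξ‖ ≤ C' * ‖ξ‖ ^ (-(β / 2)) := by
  refine ⟨max C (μ.real univ), fun ξ hξ => ?_⟩
  have hξ0 : 0 < ‖ξ‖ := norm_pos_iff.mpr hξ
  rcases le_or_gt 1 ‖ξ‖ with h1 | h1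
  · calc ‖mft μ ξ‖ ≤ C * ‖ξ‖ ^ (-(s / 2)) := by
          rw [rpow_neg hξ0.le, ← div_eq_mul_inv, le_div_iff₀ (by positivity), mul_comm]
          exact hC ξ
      _ ≤ max C (μ.real univ) * ‖ξ‖ ^ (-(β / 2)) := by
          gcongr
          · exact le_max_left _ _
  · calc ‖mft μ ξ‖ ≤ μ.real univ * 1 := by
          rw [mul_one]
          exact norm_mft_le_measureReal_univ μ ξ
      _ ≤ max C (μ.real univ) * ‖ξ‖ ^ (-(β / 2)) := by
          gcongr ?_ * ?_
          · exact le_max_right _ _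
          · exact one_le_rpow_of_pos_of_le_one_of_nonpos hξ0 h1.le (by linarith)

open Complex in
theorem exists_integral_gaussian_slab_le [IsFiniteMeasure μ] {β C : ℝ} (hβ : β < 2)
    (hC : ∀ ξ ≠ 0, ‖mft μ ξ‖ ≤ C * ‖ξ‖ ^ (-(β / 2))) :
    ∃ K, ∀ ξ ≠ 0, ∀ a : ℝ,
      ∫ p, rexp (-π * (a - inner ℝ p ξ) ^ 2) ∂μ ≤ K * ‖ξ‖ ^ (-(β / 2)) := by
  set W := ∫ σ : ℝ, |σ| ^ (-(β / 2)) * rexp (-π * σ ^ 2)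
  refine ⟨C * W, fun ξ hξ a => ?_⟩
  set F : EuclideanSpace ℝ (Fin n) → ℝ → ℂ := fun p σ =>
    cexp (↑(2 * π * (a - inner ℝ p ξ) * σ) * I) * ↑(rexp (-π * σ ^ 2))
  have hF : Integrable (Function.uncurry F) (μ.prod volume) := by
    refine ((integrable_const (1 : ℝ)).mul_prod (integrable_exp_neg_mul_sq pi_pos)).mono'
      (by fun_prop) (ae_of_all _ fun z => le_of_eq ?_)
    simp only [Function.uncurry, F, norm_mul, norm_exp_ofReal_mul_I, norm_real, one_mul,
      Real.norm_of_nonneg (exp_pos _).le]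
  have hslice (σ : ℝ) : ∫ p, F p σ ∂μ =
      cexp (↑(2 * π * a * σ) * I) * ↑(rexp (-π * σ ^ 2)) * mft μ (σ • ξ) := by
    rw [mft, ← integral_const_mul]
    congr 1 with p
    simp only [F, real_inner_smul_right]
    push_cast
    simp only [← Complex.exp_add]
    ring_nf
  have hbound : ∀ᵐ σ : ℝ, ‖∫ p, F p σ ∂μ‖ ≤
      C * ‖ξ‖ ^ (-(β / 2)) * (|σ| ^ (-(β / 2)) * rexp (-π * σ ^ 2)) := by
    filter_upwards [(volume : Measure ℝ).ae_ne 0] with σ hσ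
    rw [hslice, norm_mul, norm_mul, norm_exp_ofReal_mul_I, one_mul, norm_real,
      Real.norm_of_nonneg (exp_pos _).le]
    calc rexp (-π * σ ^ 2) * ‖mft μ (σ • ξ)‖
        ≤ rexp (-π * σ ^ 2) * (C * ‖σ • ξ‖ ^ (-(β / 2))) := by
          gcongr
          exact hC _ (smul_ne_zero hσ hξ)
      _ = C * ‖ξ‖ ^ (-(β / 2)) * (|σ| ^ (-(β / 2)) * rexp (-π * σ ^ 2)) := by
          rw [norm_smul, Real.norm_eq_abs, mul_rpow (abs_nonneg _) (norm_nonneg _)]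
          ring
  have hrepr :
      ((∫ p, rexp (-π * (a - inner ℝ p ξ) ^ 2) ∂μ : ℝ) : ℂ) = ∫ σ, ∫ p, F p σ ∂μ := by
    rw [← integral_complex_ofReal, ← integral_integral_swap hF]
    congr 1 with p
    rw [← integral_cexp_mul_gaussian]
  calc ∫ p, rexp (-π * (a - inner ℝ p ξ) ^ 2) ∂μ
      ≤ ‖((∫ p, rexp (-π * (a - inner ℝ p ξ) ^ 2) ∂μ : ℝ) : ℂ)‖ := by
        rw [norm_real]
        exact Real.le_norm_self _
    _ ≤ ∫ σ, C * ‖ξ‖ ^ (-(β / 2)) * (|σ| ^ (-(β / 2)) * rexp (-π * σ ^ 2)) := by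
        rw [hrepr]
        exact norm_integral_le_of_norm_le
          ((integrable_abs_rpow_mul_exp_neg_mul_sq pi_pos (by linarith)).const_mul _) hbound
    _ = C * W * ‖ξ‖ ^ (-(β / 2)) := by
        rw [integral_const_mul]
        ring

end MeasureFourier

-- `γ(t) + v γ'(t)` at `q = (t, v)`
noncomputable def cubicTangentPoint (q : ℝ × ℝ) : EuclideanSpace ℝ (Fin 3) :=
  pt3 (q.1 + q.2) (q.1 ^ 2 + 2 * q.1 * q.2) (q.1 ^ 3 + 3 * q.1 ^ 2 * q.2)

-- `γ'(t) × γ''(t) / 2`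
noncomputable def cubicBinormal (t : ℝ) : EuclideanSpace ℝ (Fin 3) :=
  pt3 (3 * t ^ 2) (-(3 * t)) 1

theorem inner_pt3 (a b c x y z : ℝ) :
    inner ℝ (pt3 a b c) (pt3 x y z) = a * x + b * y + c * z := by
  simp only [pt3, PiLp.continuousLinearEquiv_symm_apply, PiLp.inner_apply, RCLike.inner_apply,
    ringHom_apply, Fin.sum_univ_three, Matrix.cons_val_zero, Matrix.cons_val_one, Matrix.cons_val]
  ring

theorem continuous_cubicTangentPoint : Continuous cubicTangentPoint := by
  unfold cubicTangentPoint pt3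
  fun_prop

theorem one_le_norm_cubicBinormal (t : ℝ) : 1 ≤ ‖cubicBinormal t‖ := by
  simpa [cubicBinormal, pt3] using PiLp.norm_apply_le (cubicBinormal t) 2

theorem inner_cubicTangentPoint_cubicBinormal (t₀ v t : ℝ) :
    inner ℝ (cubicTangentPoint (t₀, v)) (cubicBinormal t) =
      t ^ 3 - (t - t₀) ^ 2 * (t - t₀ - 3 * v) := by
  rw [cubicTangentPoint, cubicBinormal, inner_pt3]
  ring

theorem iUnion_image_closedBall_nat_cubicTangentPoint :
    ⋃ N : ℕ, cubicTangentPoint '' Metric.closedBall 0 N = range cubicTangentPoint := by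
  rw [← image_iUnion, Metric.iUnion_closedBall_nat, image_univ]

noncomputable def osculatingKernel (Λ : ℝ) (p : EuclideanSpace ℝ (Fin 3)) (t : ℝ) : ℝ :=
  rexp (-π * t ^ 2) * rexp (-π * (Λ * t ^ 3 - inner ℝ p (Λ • cubicBinormal t)) ^ 2)

section OsculatingKernel

variable (Λ : ℝ)

theorem continuous_osculatingKernel : Continuous (Function.uncurry (osculatingKernel Λ)) := by
  unfold osculatingKernel cubicBinormal pt3
  fun_prop

theorem osculatingKernel_nonneg (p : EuclideanSpace ℝ (Fin 3)) (t : ℝ) :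
    0 ≤ osculatingKernel Λ p t := by
  unfold osculatingKernel
  positivity

theorem osculatingKernel_le (p : EuclideanSpace ℝ (Fin 3)) (t : ℝ) :
    osculatingKernel Λ p t ≤ rexp (-π * t ^ 2) :=
  mul_le_of_le_one_right (exp_pos _).le
    (exp_le_one_iff.mpr (mul_nonpos_of_nonpos_of_nonneg (by linarith [pi_pos]) (sq_nonneg _)))

theorem integrable_uncurry_osculatingKernel (μ : Measure (EuclideanSpace ℝ (Fin 3)))
    [IsFiniteMeasure μ] : Integrable (Function.uncurry (osculatingKernel Λ)) (μ.prod volume) := by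
  refine ((integrable_const (1 : ℝ)).mul_prod (integrable_exp_neg_mul_sq pi_pos)).mono'
    (continuous_osculatingKernel Λ).aestronglyMeasurable (ae_of_all _ fun ⟨p, t⟩ => ?_)
  rw [Function.uncurry_apply_pair, Real.norm_of_nonneg (osculatingKernel_nonneg Λ _ _), one_mul]
  exact osculatingKernel_le Λ _ _

theorem integrable_osculatingKernel (p : EuclideanSpace ℝ (Fin 3)) :
    Integrable (osculatingKernel Λ p) :=
  (integrable_exp_neg_mul_sq pi_pos).mono'
    ((continuous_osculatingKernel Λ).comp (Continuous.prodMk_right p)).aestronglyMeasurable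
    (ae_of_all _ fun t => by
      rw [Real.norm_of_nonneg (osculatingKernel_nonneg Λ _ _)]
      exact osculatingKernel_le Λ _ _)

theorem osculatingKernel_cubicTangentPoint (t₀ v t : ℝ) :
    osculatingKernel Λ (cubicTangentPoint (t₀, v)) t =
      rexp (-π * t ^ 2) * rexp (-π * (Λ * ((t - t₀) ^ 2 * (t - t₀ - 3 * v))) ^ 2) := by
  rw [osculatingKernel, real_inner_smul_right, inner_cubicTangentPoint_cubicBinormal]
  ring_nf

end OsculatingKernel

theorem le_osculatingKernel_cubicTangentPoint {R Λ δ t₀ v t : ℝ} (hΛ : 0 ≤ Λ) (hδ1 : δ ≤ 1)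
    (hδ : Λ * δ ^ 2 * (1 + 3 * R) ≤ 1) (ht₀ : |t₀| ≤ R) (hv : |v| ≤ R) (ht : |t - t₀| ≤ δ) :
    rexp (-π * (R + 1) ^ 2) * rexp (-π) ≤ osculatingKernel Λ (cubicTangentPoint (t₀, v)) t := by
  rw [osculatingKernel_cubicTangentPoint]
  have ht_abs : |t| ≤ R + 1 := by
    calc |t| = |(t - t₀) + t₀| := by ring_nf
      _ ≤ |t - t₀| + |t₀| := abs_add_le _ _
      _ ≤ R + 1 := by linarith
  have hcubic : |Λ * ((t - t₀) ^ 2 * (t - t₀ - 3 * v))| ≤ 1 := by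
    have hlin : |t - t₀ - 3 * v| ≤ 1 + 3 * R := by
      calc |t - t₀ - 3 * v| ≤ |t - t₀| + |3 * v| := abs_sub _ _
        _ ≤ 1 + 3 * R := by rw [abs_mul, abs_of_pos (three_pos : (0 : ℝ) < 3)]; linarith
    have hsq : (t - t₀) ^ 2 ≤ δ ^ 2 := sq_le_sq' (abs_le.mp ht).1 (abs_le.mp ht).2
    calc |Λ * ((t - t₀) ^ 2 * (t - t₀ - 3 * v))| = Λ * ((t - t₀) ^ 2 * |t - t₀ - 3 * v|) := by
          rw [abs_mul, abs_mul, abs_of_nonneg hΛ, abs_sq]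
      _ ≤ Λ * (δ ^ 2 * (1 + 3 * R)) :=
          mul_le_mul_of_nonneg_left (mul_le_mul hsq hlin (abs_nonneg _) (sq_nonneg _)) hΛ
      _ ≤ 1 := by linarith
  have hπ : -π ≤ 0 := neg_nonpos.mpr pi_pos.le
  refine mul_le_mul (exp_le_exp.mpr ?_) (exp_le_exp.mpr ?_) (exp_pos _).le (exp_pos _).le
  · exact mul_le_mul_of_nonpos_left (sq_le_sq' (abs_le.mp ht_abs).1 (abs_le.mp ht_abs).2) hπ
  · simpa using mul_le_mul_of_nonpos_left (sq_le_one_iff_abs_le_one _ |>.mpr hcubic) hπ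

theorem exists_mul_rpow_le_integral_osculatingKernel {R : ℝ} (hR : 0 ≤ R) :
    ∃ c > 0, ∀ Λ ≥ 1, ∀ q ∈ Metric.closedBall (0 : ℝ × ℝ) R,
      c * Λ ^ (-(1 / 2 : ℝ)) ≤ ∫ t, osculatingKernel Λ (cubicTangentPoint q) t := by
  set a := rexp (-π * (R + 1) ^ 2) * rexp (-π)
  refine ⟨2 * a * (1 + 3 * R) ^ (-(1 / 2 : ℝ)), by positivity, fun Λ hΛ ⟨t₀, v⟩ hq => ?_⟩
  obtain ⟨ht₀, hv⟩ : |t₀| ≤ R ∧ |v| ≤ R := by simpa [Prod.norm_def] using hq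
  have hΛR : 1 ≤ Λ * (1 + 3 * R) := by nlinarith
  set δ := (Λ * (1 + 3 * R)) ^ (-(1 / 2 : ℝ)) with hδ
  have hδ0 : 0 ≤ δ := by positivity
  have hδ1 : δ ≤ 1 := rpow_le_one_of_one_le_of_nonpos hΛR (by norm_num)
  have hδ_sq : Λ * δ ^ 2 * (1 + 3 * R) = 1 := by
    rw [mul_right_comm, hδ, ← rpow_natCast, ← rpow_mul (by positivity)]
    norm_num
    rw [rpow_neg_one, mul_inv_cancel₀ (by positivity)]
  calc 2 * a * (1 + 3 * R) ^ (-(1 / 2 : ℝ)) * Λ ^ (-(1 / 2 : ℝ))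
      = a * volume.real (Icc (t₀ - δ) (t₀ + δ)) := by
        rw [volume_real_Icc_of_le (by linarith), hδ, mul_comm Λ,
          mul_rpow (by positivity) (by positivity)]
        ring
    _ ≤ ∫ t, osculatingKernel Λ (cubicTangentPoint (t₀, v)) t :=
        mul_measureReal_le_integral (integrable_osculatingKernel Λ _)
          (ae_of_all _ (osculatingKernel_nonneg Λ _)) measurableSet_Icc measure_Icc_lt_top.ne
          fun t ht => le_osculatingKernel_cubicTangentPoint (by linarith) hδ1 hδ_sq.le ht₀ hv
            (abs_sub_le_iff.mpr ⟨by linarith [ht.2], by linarith [ht.1]⟩)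

section TangentSurfaceMeasure

variable (μ : Measure (EuclideanSpace ℝ (Fin 3))) [IsFiniteMeasure μ]

theorem exists_mul_rpow_le_integral_integral_osculatingKernel (hμ : μ ≠ 0)
    (hsupp : ∀ᵐ p ∂μ, p ∈ range cubicTangentPoint) :
    ∃ c > 0, ∀ Λ ≥ 1, c * Λ ^ (-(1 / 2 : ℝ)) ≤ ∫ p, (∫ t, osculatingKernel Λ p t) ∂μ := by
  obtain ⟨N, hN⟩ : ∃ N : ℕ, μ (cubicTangentPoint '' Metric.closedBall 0 N) ≠ 0 := by
    by_contra! h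
    apply hμ
    rw [← Measure.measure_univ_eq_zero, ← measure_congr (ae_eq_univ.mpr (ae_iff.mp hsupp)),
      ← iUnion_image_closedBall_nat_cubicTangentPoint]
    exact measure_iUnion_null h
  have hP : MeasurableSet (cubicTangentPoint '' Metric.closedBall 0 N) :=
    ((isCompact_closedBall _ _).image continuous_cubicTangentPoint).measurableSet
  obtain ⟨c, hc, hle⟩ := exists_mul_rpow_le_integral_osculatingKernel (Nat.cast_nonneg N)
  refine ⟨c * μ.real (cubicTangentPoint '' Metric.closedBall 0 N),
    mul_pos hc (ENNReal.toReal_pos hN (measure_ne_top _ _)), fun Λ hΛ => ?_⟩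
  rw [mul_right_comm]
  refine mul_measureReal_le_integral (integrable_uncurry_osculatingKernel Λ μ).integral_prod_left
    (ae_of_all _ fun p => integral_nonneg (osculatingKernel_nonneg Λ p)) hP (measure_ne_top _ _) ?_
  rintro _ ⟨q, hq, rfl⟩
  exact hle Λ hΛ q hq

theorem exists_integral_integral_osculatingKernel_le {β C : ℝ} (hβ0 : 0 ≤ β) (hβ2 : β < 2)
    (hC : ∀ ξ ≠ 0, ‖mft μ ξ‖ ≤ C * ‖ξ‖ ^ (-(β / 2))) :
    ∃ K, ∀ Λ ≥ 1, ∫ t, ∫ p, osculatingKernel Λ p t ∂μ ≤ K * Λ ^ (-(β / 2)) := by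
  obtain ⟨K, hK⟩ := exists_integral_gaussian_slab_le μ hβ2 hC
  have hn_pos (t : ℝ) : 0 < ‖cubicBinormal t‖ := one_pos.trans_le (one_le_norm_cubicBinormal t)
  have hK0 : 0 ≤ K := nonneg_of_mul_nonneg_left
    ((integral_nonneg fun _ => (exp_pos _).le).trans (hK _ (norm_pos_iff.mp (hn_pos 0)) 0))
    (rpow_pos_of_pos (hn_pos 0) _)
  refine ⟨K, fun Λ hΛ => ?_⟩
  have hΛ0 : 0 < Λ := one_pos.trans_le hΛ
  have hslice (t : ℝ) :
      ∫ p, osculatingKernel Λ p t ∂μ ≤ K * Λ ^ (-(β / 2)) * rexp (-π * t ^ 2) := by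
    have hnorm : Λ ≤ ‖Λ • cubicBinormal t‖ := by
      rw [norm_smul, Real.norm_of_nonneg hΛ0.le]
      exact le_mul_of_one_le_right hΛ0.le (one_le_norm_cubicBinormal t)
    simp only [osculatingKernel]
    rw [integral_const_mul, mul_comm]
    refine mul_le_mul_of_nonneg_right ?_ (exp_pos _).le
    calc ∫ p, rexp (-π * (Λ * t ^ 3 - inner ℝ p (Λ • cubicBinormal t)) ^ 2) ∂μ
        ≤ K * ‖Λ • cubicBinormal t‖ ^ (-(β / 2)) :=
          hK _ (norm_pos_iff.mp (hΛ0.trans_le hnorm)) _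
      _ ≤ K * Λ ^ (-(β / 2)) :=
          mul_le_mul_of_nonneg_left (rpow_le_rpow_of_nonpos hΛ0 hnorm (by linarith)) hK0
  calc ∫ t, ∫ p, osculatingKernel Λ p t ∂μ
      ≤ ∫ t, K * Λ ^ (-(β / 2)) * rexp (-π * t ^ 2) :=
        integral_mono_of_nonneg
          (ae_of_all _ fun t => integral_nonneg fun p => osculatingKernel_nonneg Λ p t)
          ((integrable_exp_neg_mul_sq pi_pos).const_mul _) (ae_of_all _ hslice)
    _ = K * Λ ^ (-(β / 2)) := by
        rw [integral_const_mul, integral_gaussian, div_self pi_ne_zero, sqrt_one, mul_one]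

theorem le_one_of_norm_mft_le_of_ae_mem_range_cubicTangentPoint (hμ : μ ≠ 0)
    (hsupp : ∀ᵐ p ∂μ, p ∈ range cubicTangentPoint) {β C : ℝ} (hβ0 : 0 ≤ β) (hβ2 : β < 2)
    (hC : ∀ ξ ≠ 0, ‖mft μ ξ‖ ≤ C * ‖ξ‖ ^ (-(β / 2))) : β ≤ 1 := by
  obtain ⟨c, hc, hlower⟩ := exists_mul_rpow_le_integral_integral_osculatingKernel μ hμ hsupp
  obtain ⟨K, hupper⟩ := exists_integral_integral_osculatingKernel_le μ hβ0 hβ2 hC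
  have : β / 2 ≤ 1 / 2 := le_of_forall_mul_rpow_le hc fun Λ hΛ => by
    refine (hlower Λ hΛ).trans ?_
    rw [integral_integral_swap (integrable_uncurry_osculatingKernel Λ μ)]
    exact hupper Λ hΛ
  linarith

end TangentSurfaceMeasure

theorem statement3
    (S : Set (EuclideanSpace ℝ (Fin 3)))
    (hS : S = {x : EuclideanSpace ℝ (Fin 3) | ∃ t v : ℝ, v ≠ 0 ∧
      x = pt3 (t + v) (t ^ 2 + 2 * t * v) (t ^ 3 + 3 * t ^ 2 * v)}) :
    fourierDim S ≤ 1 := by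
  have hS_sub : S ⊆ range cubicTangentPoint := by
    rw [hS]
    rintro _ ⟨t, v, -, rfl⟩
    exact ⟨(t, v), rfl⟩
  refine Real.sSup_le ?_ zero_le_one
  rintro s ⟨hs0, -, μ, _, hμ0, hμS, C, hC⟩
  have hsupp : ∀ᵐ p ∂μ, p ∈ range cubicTangentPoint :=
    measure_mono_null (compl_subset_compl.mpr hS_sub) hμS
  -- capping the exponent below `2` keeps `|σ| ^ (-β / 2)` integrable at `0`
  have hβ0 : 0 ≤ min s (3 / 2) := le_min hs0 (by norm_num)
  obtain ⟨C', hC'⟩ := exists_norm_mft_le_rpow_of_bounded μ hβ0 (min_le_left _ _) hC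
  have hβ1 := le_one_of_norm_mft_le_of_ae_mem_range_cubicTangentPoint μ hμ0 hsupp hβ0
    ((min_le_right _ _).trans_lt (by norm_num)) hC'
  exact (min_le_iff.mp hβ1).resolve_right (by norm_num)
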